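/- arXiv:1407.1301 — 2 statements merged into one kernel-verified Lean document; each statement's English description precedes it below -/
import Mathlib

section
/- Let X be a nonempty set, 𝒟 a vector lattice of bounded real-valued functions on X with the Stone property, and (ℰ,𝒟) a nonnegative definite symmetric bilinear form on which the unit contraction operates. For f ∈ 𝒟₀⁺ set K(f) := inf{ℰ(f,φ) : φ ∈ E_f}. Then K is a positive linear functional on the cone 𝒟₀⁺: K(f) ≥ 0 for every f ∈ 𝒟₀⁺; K(c·f) = c·K(f) for every f ∈ 𝒟₀⁺ and every c > 0; and K(f+g) = K(f) + K(g) for all f, g ∈ 𝒟₀⁺. -/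
open Filter Topology Pointwise

/-- The unit contraction `T₁(t) = min(max(t,0),1)`. -/
def unitContraction (t : ℝ) : ℝ := min (max t 0) 1

/-- For a nonnegative `f`, the set `E_f` of functions `φ ∈ 𝒟` with `0 ≤ φ ≤ 1` and
`φ = 1` on `{f > 0}`. -/
def Efam {X : Type*} (𝒟 : Set (X → ℝ)) (f : X → ℝ) : Set (X → ℝ) :=
  {φ | φ ∈ 𝒟 ∧ (∀ x, 0 ≤ φ x ∧ φ x ≤ 1) ∧ (∀ x, 0 < f x → φ x = 1)}

/-- The cone `𝒟₀⁺` of nonnegative `f ∈ 𝒟` with `E_f ≠ ∅`. -/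
def D0plus {X : Type*} (𝒟 : Set (X → ℝ)) : Set (X → ℝ) :=
  {f | f ∈ 𝒟 ∧ (∀ x, 0 ≤ f x) ∧ (Efam 𝒟 f).Nonempty}

/-- The killing functional `K(f) = inf{ℰ(f,φ) : φ ∈ E_f}`. -/
noncomputable def killing {X : Type*} (𝒟 : Set (X → ℝ))
    (ℰ : (X → ℝ) → (X → ℝ) → ℝ) (f : X → ℝ) : ℝ :=
  sInf ((fun φ => ℰ f φ) '' Efam 𝒟 f)

/-!
Both inequalities behind the theorem come from the unit contraction. If `φ ∈ E_f`, then
`T₁ ∘ (φ + t f) = φ` for `t > 0`, so `ℰ(φ) ≤ ℰ(φ + t f) = ℰ(φ) + 2t ℰ(f, φ) + t² ℰ(f)`, and letting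
`t → 0⁺` gives `ℰ(f, φ) ≥ 0`. If instead `h ≥ 0` vanishes on `{f > 0}` and `s f ≤ 1`, then
`T₁ ∘ (s f - t h) = s f`, which in the same way gives `ℰ(f, h) ≤ 0`. The second fact makes
`φ ↦ ℰ(f, φ)` antitone on `E_f`; since `max φ ψ ∈ E_{f+g}` for `φ ∈ E_f`, `ψ ∈ E_g`, and
`E_{f+g} ⊆ E_f ∩ E_g`, the two infima add up.
-/

theorem nonneg_of_forall_pos_mul_add_sq_mul_nonneg {a b : ℝ}
    (h : ∀ t > 0, 0 ≤ t * a + t ^ 2 * b) : 0 ≤ a := by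
  have hlim : Tendsto (fun t => a + t * b) (𝓝[>] 0) (𝓝 a) := by
    have : Tendsto (fun t : ℝ => a + t * b) (𝓝 0) (𝓝 (a + 0 * b)) :=
      (continuous_const.add (continuous_id.mul continuous_const)).tendsto 0
    simpa using this.mono_left nhdsWithin_le_nhds
  refine ge_of_tendsto hlim (eventually_nhdsWithin_of_forall fun t (ht : 0 < t) => ?_)
  refine (mul_nonneg_iff_of_pos_left ht).mp ?_
  linear_combination h t ht

theorem unitContraction_of_nonneg_of_le_one {y : ℝ} (h0 : 0 ≤ y) (h1 : y ≤ 1) :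
    unitContraction y = y := by
  rw [unitContraction, max_eq_left h0, min_eq_left h1]

theorem unitContraction_of_one_le {y : ℝ} (h : 1 ≤ y) : unitContraction y = 1 := by
  rw [unitContraction, max_eq_left (zero_le_one.trans h), min_eq_right h]

theorem unitContraction_of_nonpos {y : ℝ} (h : y ≤ 0) : unitContraction y = 0 := by
  rw [unitContraction, max_eq_right h, min_eq_left zero_le_one]

theorem exists_pos_mul_le_one {X : Type*} {f : X → ℝ} (hf : ∃ C : ℝ, ∀ x, |f x| ≤ C) :
    ∃ s > 0, ∀ x, s * f x ≤ 1 := by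
  obtain ⟨C, hC⟩ := hf
  refine ⟨(max C 1)⁻¹, by positivity, fun x => ?_⟩
  rw [inv_mul_le_one₀ (by positivity)]
  exact (le_abs_self _).trans ((hC x).trans (le_max_left _ _))

section Efam

variable {X : Type*} {𝒟 : Set (X → ℝ)} {f g : X → ℝ}

theorem Efam_subset_Efam (h : ∀ x, 0 < f x → 0 < g x) : Efam 𝒟 g ⊆ Efam 𝒟 f :=
  fun _ ⟨hD, h01, h1⟩ => ⟨hD, h01, fun x hx => h1 x (h x hx)⟩

theorem Efam_smul {c : ℝ} (hc : 0 < c) : Efam 𝒟 (c • f) = Efam 𝒟 f :=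
  (Efam_subset_Efam fun _ hx => mul_pos hc hx).antisymm
    (Efam_subset_Efam fun x (hx : 0 < c * f x) => pos_of_mul_pos_right hx hc.le)

theorem Efam_add_subset_left (hg : ∀ x, 0 ≤ g x) : Efam 𝒟 (f + g) ⊆ Efam 𝒟 f :=
  Efam_subset_Efam fun x hx => add_pos_of_pos_of_nonneg hx (hg x)

theorem Efam_add_subset_right (hf : ∀ x, 0 ≤ f x) : Efam 𝒟 (f + g) ⊆ Efam 𝒟 g :=
  Efam_subset_Efam fun x hx => add_pos_of_nonneg_of_pos (hf x) hx

theorem max_mem_Efam_add (hmax : ∀ f ∈ 𝒟, ∀ g ∈ 𝒟, (fun x => max (f x) (g x)) ∈ 𝒟)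
    {φ ψ : X → ℝ} (hφ : φ ∈ Efam 𝒟 f) (hψ : ψ ∈ Efam 𝒟 g) :
    (fun x => max (φ x) (ψ x)) ∈ Efam 𝒟 (f + g) := by
  obtain ⟨hφD, hφ01, hφ1⟩ := hφ
  obtain ⟨hψD, hψ01, hψ1⟩ := hψ
  refine ⟨hmax φ hφD ψ hψD,
    fun x => ⟨le_max_of_le_left (hφ01 x).1, max_le (hφ01 x).2 (hψ01 x).2⟩, fun x hx => ?_⟩
  by_cases hfx : 0 < f x
  · show max (φ x) (ψ x) = 1
    rw [hφ1 x hfx, max_eq_left (hψ01 x).2]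
  · have hgx : 0 < g x := by linarith [show 0 < f x + g x from hx]
    show max (φ x) (ψ x) = 1
    rw [hψ1 x hgx, max_eq_right (hφ01 x).2]

theorem add_mem_D0plus (hadd : ∀ f ∈ 𝒟, ∀ g ∈ 𝒟, f + g ∈ 𝒟)
    (hmax : ∀ f ∈ 𝒟, ∀ g ∈ 𝒟, (fun x => max (f x) (g x)) ∈ 𝒟)
    (hf : f ∈ D0plus 𝒟) (hg : g ∈ D0plus 𝒟) : f + g ∈ D0plus 𝒟 := by
  obtain ⟨hfD, hf0, φ, hφ⟩ := hf
  obtain ⟨hgD, hg0, ψ, hψ⟩ := hg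
  exact ⟨hadd f hfD g hgD, fun x => add_nonneg (hf0 x) (hg0 x), _, max_mem_Efam_add hmax hφ hψ⟩

end Efam

structure IsSymmBilinFormOn {X : Type*} (𝒟 : Set (X → ℝ))
    (ℰ : (X → ℝ) → (X → ℝ) → ℝ) : Prop where
  add_mem : ∀ f ∈ 𝒟, ∀ g ∈ 𝒟, f + g ∈ 𝒟
  smul_mem : ∀ c : ℝ, ∀ f ∈ 𝒟, c • f ∈ 𝒟
  symm : ∀ f ∈ 𝒟, ∀ g ∈ 𝒟, ℰ f g = ℰ g f
  add_left : ∀ f ∈ 𝒟, ∀ g ∈ 𝒟, ∀ h ∈ 𝒟, ℰ (f + g) h = ℰ f h + ℰ g h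
  smul_left : ∀ c : ℝ, ∀ f ∈ 𝒟, ∀ g ∈ 𝒟, ℰ (c • f) g = c * ℰ f g

def UnitContractionOperates {X : Type*} (𝒟 : Set (X → ℝ))
    (ℰ : (X → ℝ) → (X → ℝ) → ℝ) : Prop :=
  ∀ f ∈ 𝒟, unitContraction ∘ f ∈ 𝒟 ∧
    ℰ (unitContraction ∘ f) (unitContraction ∘ f) ≤ ℰ f f

namespace IsSymmBilinFormOn

variable {X : Type*} {𝒟 : Set (X → ℝ)} {ℰ : (X → ℝ) → (X → ℝ) → ℝ} {f g h : X → ℝ}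

theorem add_right (hℰ : IsSymmBilinFormOn 𝒟 ℰ) (hf : f ∈ 𝒟) (hg : g ∈ 𝒟) (hh : h ∈ 𝒟) :
    ℰ f (g + h) = ℰ f g + ℰ f h := by
  rw [hℰ.symm f hf _ (hℰ.add_mem g hg h hh), hℰ.add_left g hg h hh f hf, hℰ.symm g hg f hf,
    hℰ.symm h hh f hf]

theorem smul_right (hℰ : IsSymmBilinFormOn 𝒟 ℰ) (c : ℝ) (hf : f ∈ 𝒟) (hg : g ∈ 𝒟) :
    ℰ f (c • g) = c * ℰ f g := by
  rw [hℰ.symm f hf _ (hℰ.smul_mem c g hg), hℰ.smul_left c g hg f hf, hℰ.symm g hg f hf]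

theorem apply_add_smul_self (hℰ : IsSymmBilinFormOn 𝒟 ℰ) (hf : f ∈ 𝒟) (hg : g ∈ 𝒟) (t : ℝ) :
    ℰ (f + t • g) (f + t • g) = ℰ f f + 2 * t * ℰ f g + t ^ 2 * ℰ g g := by
  have htg := hℰ.smul_mem t g hg
  rw [hℰ.add_left f hf _ htg _ (hℰ.add_mem f hf _ htg), hℰ.add_right hf hf htg,
    hℰ.add_right htg hf htg, hℰ.smul_left t g hg f hf, hℰ.smul_left t g hg _ htg,
    hℰ.smul_right t hf hg, hℰ.smul_right t hg hg, hℰ.symm g hg f hf]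
  ring

theorem apply_nonneg_of_unitContraction_eq (hℰ : IsSymmBilinFormOn 𝒟 ℰ)
    (hT : UnitContractionOperates 𝒟 ℰ) (hf : f ∈ 𝒟) (hg : g ∈ 𝒟)
    (h : ∀ t > 0, ∀ x, unitContraction (f x + t * g x) = f x) : 0 ≤ ℰ f g := by
  have key : ∀ t > 0, 0 ≤ t * (2 * ℰ f g) + t ^ 2 * ℰ g g := by
    intro t ht
    have hle := (hT _ (hℰ.add_mem f hf _ (hℰ.smul_mem t g hg))).2
    rw [show unitContraction ∘ (f + t • g) = f from funext (h t ht),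
      hℰ.apply_add_smul_self hf hg] at hle
    linarith
  linarith [nonneg_of_forall_pos_mul_add_sq_mul_nonneg key]

theorem apply_nonneg_of_mem_Efam (hℰ : IsSymmBilinFormOn 𝒟 ℰ)
    (hT : UnitContractionOperates 𝒟 ℰ) (hf : f ∈ 𝒟) (hf0 : ∀ x, 0 ≤ f x) {φ : X → ℝ}
    (hφ : φ ∈ Efam 𝒟 f) : 0 ≤ ℰ f φ := by
  obtain ⟨hφD, hφ01, hφ1⟩ := hφ
  rw [hℰ.symm f hf φ hφD]
  refine hℰ.apply_nonneg_of_unitContraction_eq hT hφD hf fun t ht x => ?_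
  rcases (hf0 x).eq_or_lt with hx | hx
  · rw [← hx, mul_zero, add_zero]
    exact unitContraction_of_nonneg_of_le_one (hφ01 x).1 (hφ01 x).2
  · rw [hφ1 x hx]
    exact unitContraction_of_one_le (le_add_of_nonneg_right (mul_pos ht hx).le)

theorem apply_nonpos_of_eq_zero_of_pos (hℰ : IsSymmBilinFormOn 𝒟 ℰ)
    (hT : UnitContractionOperates 𝒟 ℰ) (hf : f ∈ 𝒟) (hfb : ∃ C : ℝ, ∀ x, |f x| ≤ C)
    (hf0 : ∀ x, 0 ≤ f x) (hh : h ∈ 𝒟) (hh0 : ∀ x, 0 ≤ h x) (hzero : ∀ x, 0 < f x → h x = 0) :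
    ℰ f h ≤ 0 := by
  obtain ⟨s, hs, hs1⟩ := exists_pos_mul_le_one hfb
  have key : 0 ≤ ℰ (s • f) ((-1 : ℝ) • h) := by
    refine hℰ.apply_nonneg_of_unitContraction_eq hT (hℰ.smul_mem s f hf) (hℰ.smul_mem _ h hh)
      fun t ht x => ?_
    simp only [Pi.smul_apply, smul_eq_mul]
    rcases (hf0 x).eq_or_lt with hx | hx
    · rw [← hx, mul_zero, zero_add]
      exact unitContraction_of_nonpos (by nlinarith [hh0 x])
    · rw [hzero x hx, mul_zero, mul_zero, add_zero]
      exact unitContraction_of_nonneg_of_le_one (mul_nonneg hs.le (hf0 x)) (hs1 x)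
  rw [hℰ.smul_left s f hf _ (hℰ.smul_mem _ h hh), hℰ.smul_right _ hf hh] at key
  linarith [(mul_nonneg_iff_of_pos_left hs).mp key]

theorem apply_le_of_mem_Efam_of_le (hℰ : IsSymmBilinFormOn 𝒟 ℰ)
    (hT : UnitContractionOperates 𝒟 ℰ) (hf : f ∈ 𝒟) (hfb : ∃ C : ℝ, ∀ x, |f x| ≤ C)
    (hf0 : ∀ x, 0 ≤ f x) {θ χ : X → ℝ} (hθ : θ ∈ Efam 𝒟 f) (hχ : χ ∈ Efam 𝒟 f)
    (hle : ∀ x, θ x ≤ χ x) : ℰ f χ ≤ ℰ f θ := by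
  have hd : χ + (-1 : ℝ) • θ ∈ 𝒟 := hℰ.add_mem _ hχ.1 _ (hℰ.smul_mem _ _ hθ.1)
  have hsplit : ℰ f χ = ℰ f θ + ℰ f (χ + (-1 : ℝ) • θ) := by
    rw [← hℰ.add_right hf hθ.1 hd]
    congr 1
    ext x
    simp only [Pi.add_apply, Pi.smul_apply, smul_eq_mul]
    ring
  have hnonpos := hℰ.apply_nonpos_of_eq_zero_of_pos hT hf hfb hf0 hd
    (fun x => by simp only [Pi.add_apply, Pi.smul_apply, smul_eq_mul]; linarith [hle x])
    (fun x hx => by simp [hχ.2.2 x hx, hθ.2.2 x hx])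
  linarith

end IsSymmBilinFormOn

section killing

variable {X : Type*} {𝒟 : Set (X → ℝ)} {ℰ : (X → ℝ) → (X → ℝ) → ℝ} {f g : X → ℝ}

theorem le_killing {a : ℝ} (hne : (Efam 𝒟 f).Nonempty) (h : ∀ φ ∈ Efam 𝒟 f, a ≤ ℰ f φ) :
    a ≤ killing 𝒟 ℰ f :=
  le_csInf (hne.image _) (Set.forall_mem_image.2 h)

theorem killing_le (hℰ : IsSymmBilinFormOn 𝒟 ℰ) (hT : UnitContractionOperates 𝒟 ℰ)
    (hf : f ∈ 𝒟) (hf0 : ∀ x, 0 ≤ f x) {φ : X → ℝ} (hφ : φ ∈ Efam 𝒟 f) :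
    killing 𝒟 ℰ f ≤ ℰ f φ :=
  csInf_le ⟨0, Set.forall_mem_image.2 fun _ hψ => hℰ.apply_nonneg_of_mem_Efam hT hf hf0 hψ⟩
    ⟨φ, hφ, rfl⟩

theorem killing_nonneg (hℰ : IsSymmBilinFormOn 𝒟 ℰ) (hT : UnitContractionOperates 𝒟 ℰ)
    (hf : f ∈ D0plus 𝒟) : 0 ≤ killing 𝒟 ℰ f :=
  le_killing hf.2.2 fun _ hφ => hℰ.apply_nonneg_of_mem_Efam hT hf.1 hf.2.1 hφ

theorem killing_smul (hℰ : IsSymmBilinFormOn 𝒟 ℰ) (hf : f ∈ 𝒟) {c : ℝ} (hc : 0 < c) :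
    killing 𝒟 ℰ (c • f) = c * killing 𝒟 ℰ f := by
  have himage : (fun φ => ℰ (c • f) φ) '' Efam 𝒟 f = c • ((fun φ => ℰ f φ) '' Efam 𝒟 f) := by
    rw [← Set.image_smul, Set.image_image]
    exact Set.image_congr fun φ hφ => hℰ.smul_left c f hf φ hφ.1
  rw [killing, Efam_smul hc, himage, Real.sInf_smul_of_nonneg hc.le, smul_eq_mul, killing]

theorem killing_add (hℰ : IsSymmBilinFormOn 𝒟 ℰ) (hT : UnitContractionOperates 𝒟 ℰ)
    (hmax : ∀ f ∈ 𝒟, ∀ g ∈ 𝒟, (fun x => max (f x) (g x)) ∈ 𝒟)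
    (hf : f ∈ D0plus 𝒟) (hg : g ∈ D0plus 𝒟)
    (hfb : ∃ C : ℝ, ∀ x, |f x| ≤ C) (hgb : ∃ C : ℝ, ∀ x, |g x| ≤ C) :
    killing 𝒟 ℰ (f + g) = killing 𝒟 ℰ f + killing 𝒟 ℰ g := by
  obtain ⟨hfD, hf0, hfE⟩ := hf
  obtain ⟨hgD, hg0, hgE⟩ := hg
  have hfg := add_mem_D0plus hℰ.add_mem hmax ⟨hfD, hf0, hfE⟩ ⟨hgD, hg0, hgE⟩
  have hsplit : ∀ φ ∈ Efam 𝒟 (f + g), ℰ (f + g) φ = ℰ f φ + ℰ g φ :=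
    fun φ hφ => hℰ.add_left f hfD g hgD φ hφ.1
  have hmax_le : ∀ φ ∈ Efam 𝒟 f, ∀ ψ ∈ Efam 𝒟 g,
      killing 𝒟 ℰ (f + g) ≤ ℰ f φ + ℰ g ψ := by
    intro φ hφ ψ hψ
    have hχ := max_mem_Efam_add hmax hφ hψ
    calc killing 𝒟 ℰ (f + g)
        ≤ ℰ (f + g) fun x => max (φ x) (ψ x) := killing_le hℰ hT hfg.1 hfg.2.1 hχ
      _ = ℰ f (fun x => max (φ x) (ψ x)) + ℰ g fun x => max (φ x) (ψ x) := hsplit _ hχ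
      _ ≤ ℰ f φ + ℰ g ψ := add_le_add
          (hℰ.apply_le_of_mem_Efam_of_le hT hfD hfb hf0 hφ (Efam_add_subset_left hg0 hχ)
            fun x => le_max_left _ _)
          (hℰ.apply_le_of_mem_Efam_of_le hT hgD hgb hg0 hψ (Efam_add_subset_right hf0 hχ)
            fun x => le_max_right _ _)
  refine le_antisymm ?_ (le_killing hfg.2.2 fun φ hφ => ?_)
  · have hle_f : ∀ ψ ∈ Efam 𝒟 g, killing 𝒟 ℰ (f + g) - ℰ g ψ ≤ killing 𝒟 ℰ f :=
      fun ψ hψ => le_killing hfE fun φ hφ => by linarith [hmax_le φ hφ ψ hψ]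
    have : killing 𝒟 ℰ (f + g) - killing 𝒟 ℰ f ≤ killing 𝒟 ℰ g :=
      le_killing hgE fun ψ hψ => by linarith [hle_f ψ hψ]
    linarith
  · rw [hsplit φ hφ]
    exact add_le_add (killing_le hℰ hT hfD hf0 (Efam_add_subset_left hg0 hφ))
      (killing_le hℰ hT hgD hg0 (Efam_add_subset_right hf0 hφ))

end killing

theorem statement_6_general {X : Type*} (𝒟 : Set (X → ℝ))
    (ℰ : (X → ℝ) → (X → ℝ) → ℝ)
    (hbdd : ∀ f ∈ 𝒟, ∃ C : ℝ, ∀ x, |f x| ≤ C)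
    (hadd : ∀ f ∈ 𝒟, ∀ g ∈ 𝒟, f + g ∈ 𝒟)
    (hsmul : ∀ c : ℝ, ∀ f ∈ 𝒟, c • f ∈ 𝒟)
    (hmax : ∀ f ∈ 𝒟, ∀ g ∈ 𝒟, (fun x => max (f x) (g x)) ∈ 𝒟)
    (hsym : ∀ f ∈ 𝒟, ∀ g ∈ 𝒟, ℰ f g = ℰ g f)
    (hlin_add : ∀ f ∈ 𝒟, ∀ g ∈ 𝒟, ∀ h ∈ 𝒟, ℰ (f + g) h = ℰ f h + ℰ g h)
    (hlin_smul : ∀ c : ℝ, ∀ f ∈ 𝒟, ∀ g ∈ 𝒟, ℰ (c • f) g = c * ℰ f g)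
    (hT1 : ∀ f ∈ 𝒟, unitContraction ∘ f ∈ 𝒟 ∧
      ℰ (unitContraction ∘ f) (unitContraction ∘ f) ≤ ℰ f f) :
    (∀ f ∈ D0plus 𝒟, 0 ≤ killing 𝒟 ℰ f) ∧
    (∀ f ∈ D0plus 𝒟, ∀ c : ℝ, 0 < c → killing 𝒟 ℰ (c • f) = c * killing 𝒟 ℰ f) ∧
    (∀ f ∈ D0plus 𝒟, ∀ g ∈ D0plus 𝒟,
      killing 𝒟 ℰ (f + g) = killing 𝒟 ℰ f + killing 𝒟 ℰ g) := by
  have hℰ : IsSymmBilinFormOn 𝒟 ℰ := ⟨hadd, hsmul, hsym, hlin_add, hlin_smul⟩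
  exact ⟨fun f hf => killing_nonneg hℰ hT1 hf,
    fun f hf c hc => killing_smul hℰ hf.1 hc,
    fun f hf g hg => killing_add hℰ hT1 hmax hf hg (hbdd f hf.1) (hbdd g hg.1)⟩

/-- Theorem: the killing functional `K` is a positive linear functional on the
cone `𝒟₀⁺`. -/
theorem statement_6 {X : Type*} [Nonempty X] (𝒟 : Set (X → ℝ))
    (ℰ : (X → ℝ) → (X → ℝ) → ℝ)
    (hbdd : ∀ f ∈ 𝒟, ∃ C : ℝ, ∀ x, |f x| ≤ C)
    (hadd : ∀ f ∈ 𝒟, ∀ g ∈ 𝒟, f + g ∈ 𝒟)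
    (hsmul : ∀ c : ℝ, ∀ f ∈ 𝒟, c • f ∈ 𝒟)
    (hmax : ∀ f ∈ 𝒟, ∀ g ∈ 𝒟, (fun x => max (f x) (g x)) ∈ 𝒟)
    (hmin : ∀ f ∈ 𝒟, ∀ g ∈ 𝒟, (fun x => min (f x) (g x)) ∈ 𝒟)
    (hstone : ∀ f ∈ 𝒟, (fun x => min (f x) 1) ∈ 𝒟)
    (hsym : ∀ f ∈ 𝒟, ∀ g ∈ 𝒟, ℰ f g = ℰ g f)
    (hlin_add : ∀ f ∈ 𝒟, ∀ g ∈ 𝒟, ∀ h ∈ 𝒟, ℰ (f + g) h = ℰ f h + ℰ g h)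
    (hlin_smul : ∀ c : ℝ, ∀ f ∈ 𝒟, ∀ g ∈ 𝒟, ℰ (c • f) g = c * ℰ f g)
    (hnonneg : ∀ f ∈ 𝒟, 0 ≤ ℰ f f)
    (hT1 : ∀ f ∈ 𝒟, unitContraction ∘ f ∈ 𝒟 ∧
      ℰ (unitContraction ∘ f) (unitContraction ∘ f) ≤ ℰ f f) :
    (∀ f ∈ D0plus 𝒟, 0 ≤ killing 𝒟 ℰ f) ∧
    (∀ f ∈ D0plus 𝒟, ∀ c : ℝ, 0 < c → killing 𝒟 ℰ (c • f) = c * killing 𝒟 ℰ f) ∧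
    (∀ f ∈ D0plus 𝒟, ∀ g ∈ D0plus 𝒟,
      killing 𝒟 ℰ (f + g) = killing 𝒟 ℰ f + killing 𝒟 ℰ g) :=
  statement_6_general 𝒟 ℰ hbdd hadd hsmul hmax hsym hlin_add hlin_smul hT1
end

section
/- Let X be a nonempty set, 𝒟 an algebra of bounded real-valued functions on X that is also a vector lattice with the Stone property, and (L,𝒟) a Lagrangian whose associated energy is E_L(f) := (1/2)·sup{|L_{f,f}(h)| : h ∈ 𝒟, ‖h‖_sup ≤ 1}. Then E_L satisfies the parallelogram identity 2·(E_L(f) + E_L(g)) = E_L(f+g) + E_L(f−g) for all f, g ∈ 𝒟, and the unit contraction operates on E_L: E_L(T₁∘f) ≤ E_L(f) for all f ∈ 𝒟, where T₁(x) = min(max(x,0),1). -/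
open Filter Topology

/-- The supremum norm of a (bounded) real-valued function. -/
noncomputable def supNorm {X : Type*} (f : X → ℝ) : ℝ := ⨆ x, |f x|

/-- The energy associated with a Lagrangian:
`E_L(f) = (1/2)·sup{|L_{f,f}(h)| : h ∈ 𝒟, ‖h‖_sup ≤ 1}`. -/
noncomputable def lagEnergy {X : Type*} (𝒟 : Set (X → ℝ))
    (L : (X → ℝ) → (X → ℝ) → (X → ℝ) → ℝ) (f : X → ℝ) : ℝ :=
  (1 / 2) * sSup ((fun h => |L f f h|) '' {h | h ∈ 𝒟 ∧ supNorm h ≤ 1})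

/-!
Positivity gives `|L_f h| ≤ L_f |h|`, so the supremum defining `E_L(f)` may be taken over the
nonnegative `h` of the unit ball only. On that set each `L_f` is monotone, and the set is directed
under pointwise `max`, so the supremum is additive on positive functionals. The parallelogram
identity for `E_L` is then the pointwise identity `L_{f+g} + L_{f-g} = 2 L_f + 2 L_g`, and the
contraction inequality follows from `L_{T₁∘f}(h) ≤ L_f(h)` for `h ≥ 0`.
-/

section

variable {X : Type*}

lemma supNorm_nonneg (f : X → ℝ) : 0 ≤ supNorm f :=
  Real.iSup_nonneg fun _ => abs_nonneg _

lemma abs_le_supNorm {f : X → ℝ} (hf : ∃ C : ℝ, ∀ x, |f x| ≤ C) (x : X) :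
    |f x| ≤ supNorm f := by
  obtain ⟨C, hC⟩ := hf
  exact le_ciSup ⟨C, Set.forall_mem_range.2 hC⟩ x

lemma supNorm_le {f : X → ℝ} {c : ℝ} (hc : 0 ≤ c) (hf : ∀ x, |f x| ≤ c) : supNorm f ≤ c :=
  Real.iSup_le hf hc

lemma supNorm_abs (f : X → ℝ) : supNorm |f| = supNorm f := by
  simp [supNorm]

structure IsBoundedVectorLattice (𝒟 : Set (X → ℝ)) : Prop where
  bounded : ∀ f ∈ 𝒟, ∃ C : ℝ, ∀ x, |f x| ≤ C
  add_mem : ∀ f ∈ 𝒟, ∀ g ∈ 𝒟, f + g ∈ 𝒟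
  smul_mem : ∀ c : ℝ, ∀ f ∈ 𝒟, c • f ∈ 𝒟
  max_mem : ∀ f ∈ 𝒟, ∀ g ∈ 𝒟, (fun x => max (f x) (g x)) ∈ 𝒟

def unitBall (𝒟 : Set (X → ℝ)) : Set (X → ℝ) := {h | h ∈ 𝒟 ∧ supNorm h ≤ 1}

def posBall (𝒟 : Set (X → ℝ)) : Set (X → ℝ) := {h | h ∈ 𝒟 ∧ 0 ≤ h ∧ supNorm h ≤ 1}

lemma posBall_subset_unitBall (𝒟 : Set (X → ℝ)) : posBall 𝒟 ⊆ unitBall 𝒟 :=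
  fun _ ⟨hh, _, hn⟩ => ⟨hh, hn⟩

lemma zero_mem_posBall {𝒟 : Set (X → ℝ)} (h0 : (0 : X → ℝ) ∈ 𝒟) : (0 : X → ℝ) ∈ posBall 𝒟 :=
  ⟨h0, le_rfl, supNorm_le zero_le_one fun _ => by simp⟩

namespace IsBoundedVectorLattice

variable {𝒟 : Set (X → ℝ)} (h𝒟 : IsBoundedVectorLattice 𝒟)
include h𝒟

lemma zero_mem {f : X → ℝ} (hf : f ∈ 𝒟) : (0 : X → ℝ) ∈ 𝒟 := by
  simpa using h𝒟.smul_mem 0 f hf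

lemma neg_mem {f : X → ℝ} (hf : f ∈ 𝒟) : -f ∈ 𝒟 := by
  simpa using h𝒟.smul_mem (-1) f hf

lemma sub_mem {f g : X → ℝ} (hf : f ∈ 𝒟) (hg : g ∈ 𝒟) : f - g ∈ 𝒟 := by
  simpa [sub_eq_add_neg] using h𝒟.add_mem f hf _ (h𝒟.neg_mem hg)

lemma abs_mem {f : X → ℝ} (hf : f ∈ 𝒟) : |f| ∈ 𝒟 :=
  h𝒟.max_mem f hf _ (h𝒟.neg_mem hf)

lemma abs_mem_posBall {h : X → ℝ} (hh : h ∈ unitBall 𝒟) : |h| ∈ posBall 𝒟 :=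
  ⟨h𝒟.abs_mem hh.1, abs_nonneg h, (supNorm_abs h).trans_le hh.2⟩

lemma abs_le_one_of_mem_unitBall {h : X → ℝ} (hh : h ∈ unitBall 𝒟) (x : X) : |h x| ≤ 1 :=
  (abs_le_supNorm (h𝒟.bounded h hh.1) x).trans hh.2

lemma directedOn_posBall : DirectedOn (· ≤ ·) (posBall 𝒟) := by
  rintro h₁ hh₁ h₂ hh₂
  have hle : ∀ {h}, h ∈ posBall 𝒟 → ∀ x, h x ≤ 1 := fun hh x =>
    (le_abs_self _).trans (h𝒟.abs_le_one_of_mem_unitBall (posBall_subset_unitBall 𝒟 hh) x)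
  have hnonneg : 0 ≤ h₁ ⊔ h₂ := hh₁.2.1.trans le_sup_left
  refine ⟨h₁ ⊔ h₂, ⟨h𝒟.max_mem h₁ hh₁.1 h₂ hh₂.1, hnonneg, ?_⟩, le_sup_left, le_sup_right⟩
  refine supNorm_le zero_le_one fun x => ?_
  rw [abs_of_nonneg (hnonneg x)]
  exact sup_le (hle hh₁ x) (hle hh₂ x)

end IsBoundedVectorLattice

open scoped Pointwise in
lemma sSup_image_add_of_directedOn {α : Type*} [Preorder α] {K : Set α} (hK : K.Nonempty)
    (hdir : DirectedOn (· ≤ ·) K) {ℓ₁ ℓ₂ : α → ℝ} (hm₁ : MonotoneOn ℓ₁ K)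
    (hm₂ : MonotoneOn ℓ₂ K) (hb₁ : BddAbove (ℓ₁ '' K)) (hb₂ : BddAbove (ℓ₂ '' K)) :
    sSup ((fun a => ℓ₁ a + ℓ₂ a) '' K) = sSup (ℓ₁ '' K) + sSup (ℓ₂ '' K) := by
  have hsub : (fun a => ℓ₁ a + ℓ₂ a) '' K ⊆ ℓ₁ '' K + ℓ₂ '' K := by
    rintro _ ⟨a, ha, rfl⟩
    exact Set.add_mem_add ⟨a, ha, rfl⟩ ⟨a, ha, rfl⟩
  rw [← csSup_add (hK.image _) hb₁ (hK.image _) hb₂]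
  refine le_antisymm (csSup_le_csSup (hb₁.add hb₂) (hK.image _) hsub) ?_
  refine csSup_le ((hK.image _).add (hK.image _)) ?_
  rintro _ ⟨_, ⟨a, ha, rfl⟩, _, ⟨b, hb, rfl⟩, rfl⟩
  obtain ⟨c, hc, hac, hbc⟩ := hdir a ha b hb
  exact le_csSup_of_le ((hb₁.add hb₂).mono hsub) ⟨c, hc, rfl⟩
    (add_le_add (hm₁ ha hc hac) (hm₂ hb hc hbc))

structure IsBoundedPositiveFunctional (𝒟 : Set (X → ℝ)) (ℓ : (X → ℝ) → ℝ) : Prop where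
  map_add : ∀ h₁ ∈ 𝒟, ∀ h₂ ∈ 𝒟, ℓ (h₁ + h₂) = ℓ h₁ + ℓ h₂
  map_smul : ∀ c : ℝ, ∀ h ∈ 𝒟, ℓ (c • h) = c * ℓ h
  nonneg : ∀ h ∈ 𝒟, 0 ≤ h → 0 ≤ ℓ h
  exists_bound : ∃ C : ℝ, ∀ h ∈ 𝒟, |ℓ h| ≤ C * supNorm h

noncomputable def posBallSup (𝒟 : Set (X → ℝ)) (ℓ : (X → ℝ) → ℝ) : ℝ := sSup (ℓ '' posBall 𝒟)

namespace IsBoundedPositiveFunctional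

variable {𝒟 : Set (X → ℝ)} {ℓ ℓ' : (X → ℝ) → ℝ}

lemma add (hℓ : IsBoundedPositiveFunctional 𝒟 ℓ) (hℓ' : IsBoundedPositiveFunctional 𝒟 ℓ') :
    IsBoundedPositiveFunctional 𝒟 (fun h => ℓ h + ℓ' h) where
  map_add h₁ hh₁ h₂ hh₂ := by rw [hℓ.map_add h₁ hh₁ h₂ hh₂, hℓ'.map_add h₁ hh₁ h₂ hh₂]; ring
  map_smul c h hh := by rw [hℓ.map_smul c h hh, hℓ'.map_smul c h hh]; ring
  nonneg h hh hpos := add_nonneg (hℓ.nonneg h hh hpos) (hℓ'.nonneg h hh hpos)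
  exists_bound := by
    obtain ⟨C, hC⟩ := hℓ.exists_bound
    obtain ⟨C', hC'⟩ := hℓ'.exists_bound
    exact ⟨C + C', fun h hh => (abs_add_le _ _).trans <| by linarith [hC h hh, hC' h hh]⟩

lemma bddAbove_abs_image_unitBall (hℓ : IsBoundedPositiveFunctional 𝒟 ℓ) :
    BddAbove ((fun h => |ℓ h|) '' unitBall 𝒟) := by
  obtain ⟨C, hC⟩ := hℓ.exists_bound
  refine ⟨max C 0, ?_⟩
  rintro _ ⟨h, ⟨hh, hn⟩, rfl⟩
  calc |ℓ h| ≤ C * supNorm h := hC h hh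
    _ ≤ max C 0 * supNorm h := mul_le_mul_of_nonneg_right (le_max_left C 0) (supNorm_nonneg h)
    _ ≤ max C 0 := mul_le_of_le_one_right (le_max_right C 0) hn

lemma bddAbove_image_posBall (hℓ : IsBoundedPositiveFunctional 𝒟 ℓ) :
    BddAbove (ℓ '' posBall 𝒟) := by
  obtain ⟨C, hC⟩ := hℓ.bddAbove_abs_image_unitBall
  exact ⟨C, by
    rintro _ ⟨h, hh, rfl⟩
    exact (le_abs_self _).trans (hC ⟨h, posBall_subset_unitBall 𝒟 hh, rfl⟩)⟩

variable (hℓ : IsBoundedPositiveFunctional 𝒟 ℓ) (h𝒟 : IsBoundedVectorLattice 𝒟)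
include hℓ h𝒟

lemma monotoneOn : MonotoneOn ℓ 𝒟 := by
  intro a ha b hb hab
  have hba : b - a ∈ 𝒟 := h𝒟.sub_mem hb ha
  have hsplit : ℓ (b - a) = ℓ b - ℓ a := by
    rw [sub_eq_add_neg, ← neg_one_smul ℝ a, hℓ.map_add b hb _ (h𝒟.smul_mem (-1) a ha),
      hℓ.map_smul (-1) a ha]
    ring
  linarith [hℓ.nonneg (b - a) hba (sub_nonneg.2 hab)]

lemma abs_le_map_abs {h : X → ℝ} (hh : h ∈ 𝒟) : |ℓ h| ≤ ℓ |h| := by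
  have hmono := hℓ.monotoneOn h𝒟
  have hneg : ℓ (-h) = -ℓ h := by
    rw [← neg_one_smul ℝ h, hℓ.map_smul (-1) h hh]; ring
  refine abs_le.2 ⟨?_, hmono hh (h𝒟.abs_mem hh) (le_abs_self h)⟩
  linarith [hmono (h𝒟.neg_mem hh) (h𝒟.abs_mem hh) (neg_le_abs h)]

lemma sSup_abs_image_unitBall (h0 : (0 : X → ℝ) ∈ 𝒟) :
    sSup ((fun h => |ℓ h|) '' unitBall 𝒟) = posBallSup 𝒟 ℓ := by
  refine le_antisymm ?_ ?_
  · refine csSup_le ⟨_, 0, posBall_subset_unitBall 𝒟 (zero_mem_posBall h0), rfl⟩ ?_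
    rintro _ ⟨h, hh, rfl⟩
    exact le_csSup_of_le hℓ.bddAbove_image_posBall ⟨|h|, h𝒟.abs_mem_posBall hh, rfl⟩
      (hℓ.abs_le_map_abs h𝒟 hh.1)
  · refine csSup_le ⟨_, 0, zero_mem_posBall h0, rfl⟩ ?_
    rintro _ ⟨h, hh, rfl⟩
    exact le_csSup_of_le hℓ.bddAbove_abs_image_unitBall
      ⟨h, posBall_subset_unitBall 𝒟 hh, rfl⟩ (le_abs_self _)

lemma posBallSup_add (hℓ' : IsBoundedPositiveFunctional 𝒟 ℓ') (h0 : (0 : X → ℝ) ∈ 𝒟) :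
    posBallSup 𝒟 (fun h => ℓ h + ℓ' h) = posBallSup 𝒟 ℓ + posBallSup 𝒟 ℓ' :=
  have hsub : posBall 𝒟 ⊆ 𝒟 := fun _ hh => hh.1
  sSup_image_add_of_directedOn ⟨0, zero_mem_posBall h0⟩ h𝒟.directedOn_posBall
    ((hℓ.monotoneOn h𝒟).mono hsub) ((hℓ'.monotoneOn h𝒟).mono hsub)
    hℓ.bddAbove_image_posBall hℓ'.bddAbove_image_posBall

end IsBoundedPositiveFunctional

lemma posBallSup_congr {𝒟 : Set (X → ℝ)} {ℓ ℓ' : (X → ℝ) → ℝ} (heq : ∀ h ∈ 𝒟, ℓ h = ℓ' h) :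
    posBallSup 𝒟 ℓ = posBallSup 𝒟 ℓ' :=
  congrArg sSup (Set.image_congr fun h hh => heq h hh.1)

lemma posBallSup_mono {𝒟 : Set (X → ℝ)} {ℓ ℓ' : (X → ℝ) → ℝ} (h0 : (0 : X → ℝ) ∈ 𝒟)
    (hℓ' : IsBoundedPositiveFunctional 𝒟 ℓ') (hle : ∀ h ∈ 𝒟, 0 ≤ h → ℓ h ≤ ℓ' h) :
    posBallSup 𝒟 ℓ ≤ posBallSup 𝒟 ℓ' := by
  refine csSup_le ⟨_, 0, zero_mem_posBall h0, rfl⟩ ?_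
  rintro _ ⟨h, hh, rfl⟩
  exact le_csSup_of_le hℓ'.bddAbove_image_posBall ⟨h, hh, rfl⟩ (hle h hh.1 hh.2.1)

structure IsLagrangian (𝒟 : Set (X → ℝ)) (L : (X → ℝ) → (X → ℝ) → (X → ℝ) → ℝ) : Prop where
  exists_bound : ∀ f ∈ 𝒟, ∀ g ∈ 𝒟, ∃ C : ℝ, ∀ h ∈ 𝒟, |L f g h| ≤ C * supNorm h
  map_add : ∀ f ∈ 𝒟, ∀ g ∈ 𝒟, ∀ h₁ ∈ 𝒟, ∀ h₂ ∈ 𝒟, L f g (h₁ + h₂) = L f g h₁ + L f g h₂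
  map_smul : ∀ f ∈ 𝒟, ∀ g ∈ 𝒟, ∀ c : ℝ, ∀ h ∈ 𝒟, L f g (c • h) = c * L f g h
  symm : ∀ f ∈ 𝒟, ∀ g ∈ 𝒟, ∀ h ∈ 𝒟, L f g h = L g f h
  add_left : ∀ f₁ ∈ 𝒟, ∀ f₂ ∈ 𝒟, ∀ g ∈ 𝒟, ∀ h ∈ 𝒟, L (f₁ + f₂) g h = L f₁ g h + L f₂ g h
  smul_left : ∀ c : ℝ, ∀ f ∈ 𝒟, ∀ g ∈ 𝒟, ∀ h ∈ 𝒟, L (c • f) g h = c * L f g h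
  nonneg : ∀ f ∈ 𝒟, ∀ h ∈ 𝒟, (∀ x, 0 ≤ h x) → 0 ≤ L f f h
  unitContraction_operates : ∀ f ∈ 𝒟, unitContraction ∘ f ∈ 𝒟 ∧
    ∀ h ∈ 𝒟, (∀ x, 0 ≤ h x) → L (unitContraction ∘ f) (unitContraction ∘ f) h ≤ L f f h

namespace IsLagrangian

variable {𝒟 : Set (X → ℝ)} {L : (X → ℝ) → (X → ℝ) → (X → ℝ) → ℝ} {f g : X → ℝ}
  (hL : IsLagrangian 𝒟 L)
include hL

lemma isBoundedPositiveFunctional (hf : f ∈ 𝒟) : IsBoundedPositiveFunctional 𝒟 (L f f) where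
  map_add := hL.map_add f hf f hf
  map_smul := hL.map_smul f hf f hf
  nonneg := hL.nonneg f hf
  exists_bound := hL.exists_bound f hf f hf

lemma smul_right {c : ℝ} {h : X → ℝ} (hf : f ∈ 𝒟) (hg : g ∈ 𝒟) (hc : c • g ∈ 𝒟) (hh : h ∈ 𝒟) :
    L f (c • g) h = c * L f g h := by
  rw [hL.symm f hf _ hc h hh, hL.smul_left c g hg f hf h hh, hL.symm g hg f hf h hh]

lemma diag_add {h : X → ℝ} (hf : f ∈ 𝒟) (hg : g ∈ 𝒟) (hh : h ∈ 𝒟) (hfg : f + g ∈ 𝒟) :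
    L (f + g) (f + g) h = L f f h + L f g h + L g f h + L g g h := by
  rw [hL.add_left f hf g hg _ hfg h hh, hL.symm f hf _ hfg h hh, hL.symm g hg _ hfg h hh,
    hL.add_left f hf g hg f hf h hh, hL.add_left f hf g hg g hg h hh]
  ring

lemma parallelogram {h : X → ℝ} (h𝒟 : IsBoundedVectorLattice 𝒟) (hf : f ∈ 𝒟) (hg : g ∈ 𝒟)
    (hh : h ∈ 𝒟) :
    L (f + g) (f + g) h + L (f - g) (f - g) h =
      (L f f h + L f f h) + (L g g h + L g g h) := by
  have hg' : (-1 : ℝ) • g ∈ 𝒟 := h𝒟.smul_mem (-1) g hg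
  have hsub : f - g = f + (-1 : ℝ) • g := by rw [neg_one_smul, sub_eq_add_neg]
  rw [hsub, hL.diag_add hf hg hh (h𝒟.add_mem f hf g hg),
    hL.diag_add hf hg' hh (h𝒟.add_mem f hf _ hg'), hL.smul_right hf hg hg' hh,
    hL.smul_left (-1) g hg _ hg' h hh, hL.smul_right hg hg hg' hh,
    hL.smul_left (-1) g hg f hf h hh]
  ring

lemma lagEnergy_eq (h𝒟 : IsBoundedVectorLattice 𝒟) (hf : f ∈ 𝒟) :
    lagEnergy 𝒟 L f = posBallSup 𝒟 (L f f) / 2 := by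
  rw [lagEnergy, ← (hL.isBoundedPositiveFunctional hf).sSup_abs_image_unitBall h𝒟
    (h𝒟.zero_mem hf), unitBall]
  ring

lemma posBallSup_parallelogram (h𝒟 : IsBoundedVectorLattice 𝒟) (hf : f ∈ 𝒟) (hg : g ∈ 𝒟) :
    posBallSup 𝒟 (L (f + g) (f + g)) + posBallSup 𝒟 (L (f - g) (f - g)) =
      2 * posBallSup 𝒟 (L f f) + 2 * posBallSup 𝒟 (L g g) := by
  have hE : ∀ {f}, f ∈ 𝒟 → IsBoundedPositiveFunctional 𝒟 (L f f) :=
    hL.isBoundedPositiveFunctional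
  have h0 := h𝒟.zero_mem hf
  rw [← (hE (h𝒟.add_mem f hf g hg)).posBallSup_add h𝒟 (hE (h𝒟.sub_mem hf hg)) h0,
    posBallSup_congr fun h hh => hL.parallelogram h𝒟 hf hg hh,
    ((hE hf).add (hE hf)).posBallSup_add h𝒟 ((hE hg).add (hE hg)) h0,
    (hE hf).posBallSup_add h𝒟 (hE hf) h0, (hE hg).posBallSup_add h𝒟 (hE hg) h0]
  ring

lemma lagEnergy_parallelogram (h𝒟 : IsBoundedVectorLattice 𝒟) (hf : f ∈ 𝒟) (hg : g ∈ 𝒟) :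
    2 * (lagEnergy 𝒟 L f + lagEnergy 𝒟 L g) = lagEnergy 𝒟 L (f + g) + lagEnergy 𝒟 L (f - g) := by
  rw [hL.lagEnergy_eq h𝒟 hf, hL.lagEnergy_eq h𝒟 hg, hL.lagEnergy_eq h𝒟 (h𝒟.add_mem f hf g hg),
    hL.lagEnergy_eq h𝒟 (h𝒟.sub_mem hf hg)]
  linarith [hL.posBallSup_parallelogram h𝒟 hf hg]

lemma lagEnergy_unitContraction_le (h𝒟 : IsBoundedVectorLattice 𝒟) (hf : f ∈ 𝒟) :
    lagEnergy 𝒟 L (unitContraction ∘ f) ≤ lagEnergy 𝒟 L f := by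
  obtain ⟨hTf, hle⟩ := hL.unitContraction_operates f hf
  rw [hL.lagEnergy_eq h𝒟 hf, hL.lagEnergy_eq h𝒟 hTf]
  gcongr
  exact posBallSup_mono (h𝒟.zero_mem hf) (hL.isBoundedPositiveFunctional hf) hle

end IsLagrangian

end

theorem statement_11_general {X : Type*} (𝒟 : Set (X → ℝ))
    (L : (X → ℝ) → (X → ℝ) → (X → ℝ) → ℝ)
    (hbdd : ∀ f ∈ 𝒟, ∃ C : ℝ, ∀ x, |f x| ≤ C)
    (hadd : ∀ f ∈ 𝒟, ∀ g ∈ 𝒟, f + g ∈ 𝒟)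
    (hsmul : ∀ c : ℝ, ∀ f ∈ 𝒟, c • f ∈ 𝒟)
    (hmax : ∀ f ∈ 𝒟, ∀ g ∈ 𝒟, (fun x => max (f x) (g x)) ∈ 𝒟)
    -- each `L_{f,g}` is a sup-norm-bounded linear functional on `𝒟`
    (hLbdd : ∀ f ∈ 𝒟, ∀ g ∈ 𝒟, ∃ C : ℝ, ∀ h ∈ 𝒟, |L f g h| ≤ C * supNorm h)
    (hLaddh : ∀ f ∈ 𝒟, ∀ g ∈ 𝒟, ∀ h₁ ∈ 𝒟, ∀ h₂ ∈ 𝒟,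
      L f g (h₁ + h₂) = L f g h₁ + L f g h₂)
    (hLsmulh : ∀ f ∈ 𝒟, ∀ g ∈ 𝒟, ∀ c : ℝ, ∀ h ∈ 𝒟, L f g (c • h) = c * L f g h)
    -- `L` is bilinear and symmetric in `(f,g)`
    (hLsym : ∀ f ∈ 𝒟, ∀ g ∈ 𝒟, ∀ h ∈ 𝒟, L f g h = L g f h)
    (hLaddf : ∀ f₁ ∈ 𝒟, ∀ f₂ ∈ 𝒟, ∀ g ∈ 𝒟, ∀ h ∈ 𝒟,
      L (f₁ + f₂) g h = L f₁ g h + L f₂ g h)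
    (hLsmulf : ∀ c : ℝ, ∀ f ∈ 𝒟, ∀ g ∈ 𝒟, ∀ h ∈ 𝒟, L (c • f) g h = c * L f g h)
    -- positivity of each `L_f = L_{f,f}`
    (hLpos : ∀ f ∈ 𝒟, ∀ h ∈ 𝒟, (∀ x, 0 ≤ h x) → 0 ≤ L f f h)
    -- the unit contraction operates on `(L,𝒟)`
    (hLT1 : ∀ f ∈ 𝒟, unitContraction ∘ f ∈ 𝒟 ∧
      ∀ h ∈ 𝒟, (∀ x, 0 ≤ h x) →
        L (unitContraction ∘ f) (unitContraction ∘ f) h ≤ L f f h) :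
    (∀ f ∈ 𝒟, ∀ g ∈ 𝒟,
      2 * (lagEnergy 𝒟 L f + lagEnergy 𝒟 L g) =
        lagEnergy 𝒟 L (f + g) + lagEnergy 𝒟 L (f - g)) ∧
    (∀ f ∈ 𝒟, lagEnergy 𝒟 L (unitContraction ∘ f) ≤ lagEnergy 𝒟 L f) := by
  have h𝒟 : IsBoundedVectorLattice 𝒟 := ⟨hbdd, hadd, hsmul, hmax⟩
  have hL : IsLagrangian 𝒟 L :=
    ⟨hLbdd, hLaddh, hLsmulh, hLsym, hLaddf, hLsmulf, hLpos, hLT1⟩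
  exact ⟨fun f hf g hg => hL.lagEnergy_parallelogram h𝒟 hf hg,
    fun f hf => hL.lagEnergy_unitContraction_le h𝒟 hf⟩

/-- Theorem: the energy `E_L` associated with a Lagrangian `(L,𝒟)` satisfies the
parallelogram identity and the unit contraction operates on it. -/
theorem statement_11 {X : Type*} [Nonempty X] (𝒟 : Set (X → ℝ))
    (L : (X → ℝ) → (X → ℝ) → (X → ℝ) → ℝ)
    (hbdd : ∀ f ∈ 𝒟, ∃ C : ℝ, ∀ x, |f x| ≤ C)
    (hadd : ∀ f ∈ 𝒟, ∀ g ∈ 𝒟, f + g ∈ 𝒟)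
    (hsmul : ∀ c : ℝ, ∀ f ∈ 𝒟, c • f ∈ 𝒟)
    (hmul : ∀ f ∈ 𝒟, ∀ g ∈ 𝒟, f * g ∈ 𝒟)
    (hmax : ∀ f ∈ 𝒟, ∀ g ∈ 𝒟, (fun x => max (f x) (g x)) ∈ 𝒟)
    (hmin : ∀ f ∈ 𝒟, ∀ g ∈ 𝒟, (fun x => min (f x) (g x)) ∈ 𝒟)
    (hstone : ∀ f ∈ 𝒟, (fun x => min (f x) 1) ∈ 𝒟)
    -- each `L_{f,g}` is a sup-norm-bounded linear functional on `𝒟`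
    (hLbdd : ∀ f ∈ 𝒟, ∀ g ∈ 𝒟, ∃ C : ℝ, ∀ h ∈ 𝒟, |L f g h| ≤ C * supNorm h)
    (hLaddh : ∀ f ∈ 𝒟, ∀ g ∈ 𝒟, ∀ h₁ ∈ 𝒟, ∀ h₂ ∈ 𝒟,
      L f g (h₁ + h₂) = L f g h₁ + L f g h₂)
    (hLsmulh : ∀ f ∈ 𝒟, ∀ g ∈ 𝒟, ∀ c : ℝ, ∀ h ∈ 𝒟, L f g (c • h) = c * L f g h)
    -- `L` is bilinear and symmetric in `(f,g)`
    (hLsym : ∀ f ∈ 𝒟, ∀ g ∈ 𝒟, ∀ h ∈ 𝒟, L f g h = L g f h)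
    (hLaddf : ∀ f₁ ∈ 𝒟, ∀ f₂ ∈ 𝒟, ∀ g ∈ 𝒟, ∀ h ∈ 𝒟,
      L (f₁ + f₂) g h = L f₁ g h + L f₂ g h)
    (hLsmulf : ∀ c : ℝ, ∀ f ∈ 𝒟, ∀ g ∈ 𝒟, ∀ h ∈ 𝒟, L (c • f) g h = c * L f g h)
    -- positivity of each `L_f = L_{f,f}`
    (hLpos : ∀ f ∈ 𝒟, ∀ h ∈ 𝒟, (∀ x, 0 ≤ h x) → 0 ≤ L f f h)
    -- the unit contraction operates on `(L,𝒟)`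
    (hLT1 : ∀ f ∈ 𝒟, unitContraction ∘ f ∈ 𝒟 ∧
      ∀ h ∈ 𝒟, (∀ x, 0 ≤ h x) →
        L (unitContraction ∘ f) (unitContraction ∘ f) h ≤ L f f h) :
    (∀ f ∈ 𝒟, ∀ g ∈ 𝒟,
      2 * (lagEnergy 𝒟 L f + lagEnergy 𝒟 L g) =
        lagEnergy 𝒟 L (f + g) + lagEnergy 𝒟 L (f - g)) ∧
    (∀ f ∈ 𝒟, lagEnergy 𝒟 L (unitContraction ∘ f) ≤ lagEnergy 𝒟 L f) :=
  statement_11_general 𝒟 L hbdd hadd hsmul hmax hLbdd hLaddh hLsmulh hLsym hLaddf hLsmulf hLpos hLT1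
end
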